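/- The probability measure π(dk) = (1/8)Φ(k)dk on the two-dimensional torus 𝕋² is a probability measure and is invariant for the Markov transition kernel P, i.e. ∫_{𝕋²} π(dk) P(k,A) = π(A) for every Borel set A ⊆ 𝕋². -/

import Mathlib

/-! The joint density of `π(dk) P(k, dk')` is `(1/8) Φ(k) Φ(k)⁻¹ R(k, k') = (1/8) R(k, k')`.
Since `∫ sin²(π x) dx = 1/2`, integrating `R(k, k')` in `k` gives back `Φ(k')`, so by Tonelli
`π P = π`; integrating `Φ` the same way gives total mass `1`. -/

open MeasureTheory Real Filter Set
open scoped ENNReal NNReal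

noncomputable section

instance : Fact ((0:ℝ) < 1) := ⟨one_pos⟩

/-- The one-dimensional torus `ℝ/ℤ`. -/
abbrev Torus := AddCircle (1 : ℝ)

/-- The two-dimensional torus `𝕋²`. -/
abbrev T2 := Torus × Torus

lemma sin_sq_periodic : Function.Periodic (fun x : ℝ => Real.sin (π * x) ^ 2) 1 := by
  intro x
  simp only []
  have h : π * (x + 1) = π * x + π := by ring
  rw [h, Real.sin_add_pi]
  ring

lemma sincos_periodic :
    Function.Periodic (fun x : ℝ => Real.sin (π * x) * Real.cos (π * x)) 1 := by
  intro x
  simp only []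
  have h : π * (x + 1) = π * x + π := by ring
  rw [h, Real.sin_add_pi, Real.cos_add_pi]
  ring

/-- `sin²(π k)` as a function on the circle. -/
def sin2 : Torus → ℝ := sin_sq_periodic.lift

/-- `sin(π k) cos(π k)` as a function on the circle. -/
def sincos : Torus → ℝ := sincos_periodic.lift

/-- The components of a point of the torus. -/
def tcomp (k : T2) : Fin 2 → Torus := ![k.1, k.2]

/-- `Φ(k) = 8 ∑_α sin²(π k_α)`. -/
def Phi (k : T2) : ℝ := 8 * (sin2 k.1 + sin2 k.2)

/-- The scattering kernel `R(k,k') = 16 ∑_α sin²(π k_α) sin²(π k'_α)`. -/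
def Rker (k k' : T2) : ℝ := 16 * (sin2 k.1 * sin2 k'.1 + sin2 k.2 * sin2 k'.2)

/-- The velocity `v_α(k) = sin(π k_α) cos(π k_α) / (∑_β sin²(π k_β))^{1/2}`. -/
def vel (α : Fin 2) (k : T2) : ℝ :=
  sincos (tcomp k α) / Real.sqrt (sin2 k.1 + sin2 k.2)

/-- `ψ(k) = Φ(k)⁻¹ v(k)`. -/
def psiC (α : Fin 2) (k : T2) : ℝ := vel α k / Phi k

/-- The Markov transition kernel `P(k,dk') = Φ(k)⁻¹ R(k,k') dk'` on `𝕋²`. -/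
def Pker (k : T2) : Measure T2 :=
  (volume : Measure T2).withDensity fun k' => ENNReal.ofReal ((Phi k)⁻¹ * Rker k k')

/-- The `m`-step kernel (`Pn 0 k` is the Dirac mass at `k`). -/
def Pn : ℕ → T2 → Measure T2
  | 0, k => Measure.dirac k
  | (m + 1), k => (Pn m k).bind Pker

/-- The measure `π(dk) = (1/8) Φ(k) dk`. -/
def piM : Measure T2 :=
  (volume : Measure T2).withDensity fun k => ENNReal.ofReal ((1 / 8) * Phi k)

/-- The exponential distribution with mean one. -/
def expMeasure : Measure ℝ :=
  (volume : Measure ℝ).withDensity fun z =>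
    if 0 ≤ z then ENNReal.ofReal (Real.exp (-z)) else 0

section StationaryDensity

variable {α : Type*} [MeasurableSpace α] {ν : Measure α} [SFinite ν]
  {g : α → α → ℝ≥0∞}

lemma measurable_withDensity_of_measurable_uncurry (hg : Measurable (Function.uncurry g)) :
    Measurable fun x => ν.withDensity (g x) := by
  have hκ : (fun x => ν.withDensity (g x))
      = ProbabilityTheory.Kernel.withDensity (.const α ν) g := by
    ext1 x
    rw [ProbabilityTheory.Kernel.withDensity_apply _ hg, ProbabilityTheory.Kernel.const_apply]
  rw [hκ]
  exact ProbabilityTheory.Kernel.measurable _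

theorem withDensity_bind_withDensity_eq_self {f : α → ℝ≥0∞} (hf : Measurable f)
    (hg : Measurable (Function.uncurry g)) (h : ∀ y, ∫⁻ x, f x * g x y ∂ν = f y) :
    (ν.withDensity f).bind (fun x => ν.withDensity (g x)) = ν.withDensity f := by
  have hκ := measurable_withDensity_of_measurable_uncurry (ν := ν) hg
  ext s hs
  have hκs : Measurable fun x => ν.withDensity (g x) s := (Measure.measurable_coe hs).comp hκ
  rw [Measure.bind_apply hs hκ.aemeasurable]
  calc ∫⁻ x, ν.withDensity (g x) s ∂ν.withDensity f
      = ∫⁻ x, f x * ∫⁻ y in s, g x y ∂ν ∂ν := by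
        rw [lintegral_withDensity_eq_lintegral_mul _ hf hκs]
        simp only [Pi.mul_apply, withDensity_apply _ hs]
    _ = ∫⁻ x, ∫⁻ y in s, f x * g x y ∂ν ∂ν := by
        congr with x
        exact (lintegral_const_mul _ (hg.comp measurable_prodMk_left)).symm
    _ = ∫⁻ y in s, ∫⁻ x, f x * g x y ∂ν ∂ν :=
        lintegral_lintegral_swap ((hf.comp measurable_fst).mul hg).aemeasurable
    _ = ν.withDensity f s := by
        simp only [h, withDensity_apply _ hs]

end StationaryDensity

section CompactSpace

variable {X : Type*} [TopologicalSpace X] [CompactSpace X] [MeasurableSpace X]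
  [OpensMeasurableSpace X] {μ : Measure X} [IsFiniteMeasure μ] {f : X → ℝ}

lemma integrable_of_continuous (hf : Continuous f) : Integrable f μ :=
  hf.integrable_of_hasCompactSupport (.of_compactSpace f)

lemma lintegral_ofReal_of_continuous (hf : Continuous f) (hf0 : 0 ≤ f) :
    ∫⁻ x, ENNReal.ofReal (f x) ∂μ = ENNReal.ofReal (∫ x, f x ∂μ) :=
  (ofReal_integral_eq_lintegral_ofReal (integrable_of_continuous hf) (.of_forall hf0)).symm

end CompactSpace

@[fun_prop]
lemma continuous_sin2 : Continuous sin2 :=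
  Continuous.quotient_liftOn' (by fun_prop) _

lemma sin2_nonneg (x : Torus) : 0 ≤ sin2 x := by
  induction x using QuotientAddGroup.induction_on with
  | H a =>
    rw [sin2, sin_sq_periodic.lift_coe]
    positivity

lemma integral_sin2 : ∫ x : Torus, sin2 x = 1 / 2 := by
  rw [← AddCircle.intervalIntegral_preimage 1 0 sin2]
  simp only [sin2, sin_sq_periodic.lift_coe, zero_add]
  rw [intervalIntegral.integral_comp_mul_left (fun x => Real.sin x ^ 2) pi_ne_zero, mul_zero,
    mul_one, integral_sin_sq]
  simp only [sin_zero, cos_zero, mul_one, sin_pi, cos_pi, mul_neg, neg_zero, sub_self, zero_add,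
    sub_zero, smul_eq_mul, one_div]
  field_simp

lemma integral_sin2_fst : ∫ k : T2, sin2 k.1 = 1 / 2 := by
  simp [Measure.volume_eq_prod, integral_fun_fst, integral_sin2, measureReal_def]

lemma integral_sin2_snd : ∫ k : T2, sin2 k.2 = 1 / 2 := by
  simp [Measure.volume_eq_prod, integral_fun_snd, integral_sin2, measureReal_def]

@[fun_prop]
lemma continuous_Phi : Continuous Phi := by
  unfold Phi; fun_prop

lemma Phi_nonneg (k : T2) : 0 ≤ Phi k := by
  have := sin2_nonneg k.1; have := sin2_nonneg k.2
  unfold Phi; positivity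

lemma Rker_nonneg (k k' : T2) : 0 ≤ Rker k k' := by
  have := sin2_nonneg k.1; have := sin2_nonneg k.2
  have := sin2_nonneg k'.1; have := sin2_nonneg k'.2
  unfold Rker; positivity

@[fun_prop]
lemma continuous_Rker : Continuous fun p : T2 × T2 => Rker p.1 p.2 := by
  unfold Rker; fun_prop

lemma integral_Phi : ∫ k, Phi k = 8 := by
  simp only [Phi]
  rw [integral_const_mul, integral_add (integrable_of_continuous (by fun_prop))
    (integrable_of_continuous (by fun_prop)), integral_sin2_fst, integral_sin2_snd]
  norm_num

lemma integral_Rker_left (k' : T2) : ∫ k, Rker k k' = Phi k' := by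
  simp only [Rker]
  rw [integral_const_mul, integral_add (integrable_of_continuous (by fun_prop))
    (integrable_of_continuous (by fun_prop)), integral_mul_const, integral_mul_const,
    integral_sin2_fst, integral_sin2_snd, Phi]
  ring

/-- Where `Φ(k) = 0` the junk value `0⁻¹ = 0` is harmless: `R(k, ·)` vanishes there too. -/
lemma Phi_mul_inv_mul_Rker (k k' : T2) : Phi k * ((Phi k)⁻¹ * Rker k k') = Rker k k' := by
  rcases eq_or_ne (Phi k) 0 with hΦ | hΦ
  · have h₁ : sin2 k.1 = 0 := by
      have := sin2_nonneg k.2; have := sin2_nonneg k.1; rw [Phi] at hΦ; linarith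
    have h₂ : sin2 k.2 = 0 := by
      have := sin2_nonneg k.1; rw [Phi, h₁] at hΦ; linarith
    simp [hΦ, Rker, h₁, h₂]
  · exact mul_inv_cancel_left₀ hΦ _

lemma piM_univ : piM univ = 1 := by
  have h₀ (k : T2) : 0 ≤ 1 / 8 * Phi k := mul_nonneg (by norm_num) (Phi_nonneg k)
  rw [piM, withDensity_apply _ MeasurableSet.univ, Measure.restrict_univ,
    lintegral_ofReal_of_continuous (by fun_prop) h₀, integral_const_mul, integral_Phi]
  norm_num

lemma lintegral_piM_density_mul_Pker_density (k' : T2) :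
    ∫⁻ k, ENNReal.ofReal (1 / 8 * Phi k) * ENNReal.ofReal ((Phi k)⁻¹ * Rker k k')
      = ENNReal.ofReal (1 / 8 * Phi k') := by
  calc ∫⁻ k, ENNReal.ofReal (1 / 8 * Phi k) * ENNReal.ofReal ((Phi k)⁻¹ * Rker k k')
      = ∫⁻ k, ENNReal.ofReal (1 / 8 * Rker k k') := by
        congr with k
        rw [← ENNReal.ofReal_mul (mul_nonneg (by norm_num) (Phi_nonneg k)), mul_assoc,
          Phi_mul_inv_mul_Rker]
    _ = ENNReal.ofReal (1 / 8 * Phi k') := by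
        have h₀ (k : T2) : 0 ≤ 1 / 8 * Rker k k' := mul_nonneg (by norm_num) (Rker_nonneg k k')
        rw [lintegral_ofReal_of_continuous (by fun_prop) h₀, integral_const_mul,
          integral_Rker_left]

/-- `π(dk) = (1/8)Φ(k)dk` is a probability measure on `𝕋²` and is
invariant for the Markov kernel `P`: `∫ π(dk) P(k,·) = π`. -/
theorem piM_isProbability_and_invariant :
    IsProbabilityMeasure piM ∧ piM.bind Pker = piM :=
  ⟨⟨piM_univ⟩, withDensity_bind_withDensity_eq_self (by fun_prop)
    (by fun_prop) lintegral_piM_density_mul_Pker_density⟩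

end
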